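/- For real k ≥ 5 and any r > 0, the integral ∫_{r/2}^∞ sinh(ρ + r/2)/cosh^k(ρ/2) dρ, divided by sinh²(r/4), is at most (4/((k−2)cosh^{k−2}(r/4)))·(2 + 1/sinh²(r/4)) + (8/((k−4)cosh^{k−4}(r/4)))·(1/sinh²(r/4)). -/

import Mathlib

open Real MeasureTheory Set Filter Topology

lemma tail_integral_key (a m : ℝ) (ha : 0 ≤ a) (hm : 1 < m) :
    IntegrableOn (fun ρ => Real.sinh (ρ / 2) * Real.cosh (ρ / 2) ^ (-m)) (Ioi a) ∧
      ∫ ρ in Ioi a, Real.sinh (ρ / 2) * Real.cosh (ρ / 2) ^ (-m)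
        = 2 / (m - 1) * Real.cosh (a / 2) ^ (1 - m) := by
  have hm1 : m - 1 ≠ 0 := by linarith
  set F : ℝ → ℝ := fun ρ => -2 / (m - 1) * Real.cosh (ρ / 2) ^ (1 - m) with hF
  have hderiv : ∀ x ∈ Ici a, HasDerivAt F (Real.sinh (x / 2) * Real.cosh (x / 2) ^ (-m)) x := by
    intro x _
    have hc : HasDerivAt (fun ρ : ℝ => Real.cosh (ρ / 2)) (Real.sinh (x / 2) * (1 / 2)) x := by
      simpa using ((hasDerivAt_id' x).div_const 2).cosh
    have hp := ((hc.rpow_const (p := 1 - m) (Or.inl (Real.cosh_pos (x / 2)).ne'))).const_mul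
      (-2 / (m - 1))
    refine hp.congr_deriv ?_
    have h1 : (1 : ℝ) - m - 1 = -m := by ring
    rw [h1]
    field_simp
    ring
  have hpos : ∀ x ∈ Ioi a, 0 ≤ Real.sinh (x / 2) * Real.cosh (x / 2) ^ (-m) := by
    intro x hx
    have : (0:ℝ) ≤ x := le_of_lt (lt_of_le_of_lt ha hx)
    exact mul_nonneg (Real.sinh_nonneg_iff.2 (by linarith)) (Real.rpow_nonneg (Real.cosh_pos _).le _)
  have htend : Tendsto F atTop (𝓝 0) := by
    have h1 : Tendsto (fun ρ : ℝ => Real.cosh (ρ / 2)) atTop atTop := by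
      apply tendsto_atTop_mono (fun x => ?_)
        ((Real.tendsto_exp_atTop.comp (tendsto_id.atTop_div_const two_pos)).atTop_div_const
          two_pos)
      have := Real.exp_pos (-(x / 2))
      simp only [Real.cosh_eq, Function.comp, id_eq]
      linarith
    have h2 : Tendsto (fun ρ : ℝ => Real.cosh (ρ / 2) ^ (1 - m)) atTop (𝓝 0) := by
      have := (tendsto_rpow_neg_atTop (by linarith : (0:ℝ) < m - 1)).comp h1
      simpa [Function.comp_def, show -(m-1) = 1 - m by ring] using this
    simpa using h2.const_mul (-2 / (m - 1))
  have hint : IntegrableOn (fun ρ => Real.sinh (ρ / 2) * Real.cosh (ρ / 2) ^ (-m)) (Ioi a) :=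
    integrableOn_Ioi_deriv_of_nonneg' hderiv hpos htend
  refine ⟨hint, ?_⟩
  rw [integral_Ioi_of_hasDerivAt_of_tendsto' hderiv hint htend]
  simp only [hF]
  field_simp
  ring

/-- For real k ≥ 5 and r > 0, the integral ∫_{r/2}^∞ sinh(ρ + r/2)/cosh^k(ρ/2) dρ divided by
    sinh²(r/4) is bounded by the stated quantity. -/
theorem integral_tail_bound (k r : ℝ) (hk : 5 ≤ k) (hr : 0 < r) :
    (∫ ρ in Set.Ioi (r / 2), Real.sinh (ρ + r / 2) / Real.cosh (ρ / 2) ^ k) /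
        Real.sinh (r / 4) ^ 2 ≤
      4 / ((k - 2) * Real.cosh (r / 4) ^ (k - 2)) * (2 + 1 / Real.sinh (r / 4) ^ 2) +
        8 / ((k - 4) * Real.cosh (r / 4) ^ (k - 4)) * (1 / Real.sinh (r / 4) ^ 2) := by
  have ha : (0:ℝ) ≤ r / 2 := by linarith
  obtain ⟨hint1, hval1⟩ := tail_integral_key (r / 2) (k - 1) ha (by linarith)
  obtain ⟨hint2, hval2⟩ := tail_integral_key (r / 2) (k - 3) ha (by linarith)
  set s := Real.sinh (r / 4) with hs
  set c := Real.cosh (r / 4) with hc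
  have hspos : 0 < s := Real.sinh_pos_iff.2 (by linarith)
  have hcpos : 0 < c := Real.cosh_pos _
  -- dominating function
  set g : ℝ → ℝ := fun x =>
    2 * Real.cosh (r / 2) * (Real.sinh (x / 2) * Real.cosh (x / 2) ^ (-(k - 1)))
      + 4 * (Real.sinh (x / 2) * Real.cosh (x / 2) ^ (-(k - 3))) with hg
  have hgint : IntegrableOn g (Ioi (r / 2)) :=
    ((hint1.const_mul _).add (hint2.const_mul _))
  -- pointwise bound
  have hbound : ∀ x ∈ Ioi (r / 2),
      Real.sinh (x + r / 2) / Real.cosh (x / 2) ^ k ≤ g x := by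
    intro x hx
    have hx' : r / 2 < x := hx
    have hx0 : 0 < x := lt_of_le_of_lt ha hx'
    set C := Real.cosh (x / 2) with hC
    set S := Real.sinh (x / 2) with hS
    have hCpos : 0 < C := Real.cosh_pos _
    have hSpos : 0 < S := Real.sinh_pos_iff.2 (by linarith)
    have hsinhx : Real.sinh x = 2 * S * C := by
      rw [show x = x / 2 + x / 2 by ring, Real.sinh_add]; ring
    have hcoshx : Real.cosh x ≤ 2 * C ^ 2 := by
      rw [show x = x / 2 + x / 2 by ring, Real.cosh_add]
      have := Real.sinh_sq (x / 2)
      nlinarith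
    have hmono : Real.sinh (r / 2) ≤ Real.sinh x := Real.sinh_le_sinh.2 (by linarith)
    have hnum : Real.sinh (x + r / 2)
        ≤ 2 * Real.cosh (r / 2) * S * C + 4 * S * C ^ 3 := by
      rw [Real.sinh_add]
      have h1 : Real.cosh x * Real.sinh (r / 2) ≤ 2 * C ^ 2 * Real.sinh x := by
        have hsx : 0 < Real.sinh x := Real.sinh_pos_iff.2 hx0
        have hcx : 0 < Real.cosh x := Real.cosh_pos _
        nlinarith
      calc Real.sinh x * Real.cosh (r / 2) + Real.cosh x * Real.sinh (r / 2)
          ≤ Real.sinh x * Real.cosh (r / 2) + 2 * C ^ 2 * Real.sinh x := by linarith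
        _ = 2 * Real.cosh (r / 2) * S * C + 4 * S * C ^ 3 := by rw [hsinhx]; ring
    -- rewrite g x using rpow arithmetic
    have hC1 : C ^ (-(k - 1)) = C ^ (-k) * C := by
      rw [show -(k - 1) = -k + 1 by ring, Real.rpow_add hCpos, Real.rpow_one]
    have hC3 : C ^ (-(k - 3)) = C ^ (-k) * C ^ 3 := by
      rw [show -(k - 3) = -k + 3 by ring, Real.rpow_add hCpos]
      congr 1
      rw [show (3:ℝ) = ((3:ℕ):ℝ) by norm_num, Real.rpow_natCast]
    have hck : (0:ℝ) < C ^ (-k) := Real.rpow_pos_of_pos hCpos _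
    have : Real.sinh (x + r / 2) / C ^ k = Real.sinh (x + r / 2) * C ^ (-k) := by
      rw [Real.rpow_neg hCpos.le, div_eq_mul_inv]
    rw [this]
    simp only [hg]
    rw [hC1, hC3]
    calc Real.sinh (x + r / 2) * C ^ (-k)
        ≤ (2 * Real.cosh (r / 2) * S * C + 4 * S * C ^ 3) * C ^ (-k) := by
          exact mul_le_mul_of_nonneg_right hnum hck.le
      _ = 2 * Real.cosh (r / 2) * (S * (C ^ (-k) * C)) + 4 * (S * (C ^ (-k) * C ^ 3)) := by
          ring
  have hfnonneg : ∀ x ∈ Ioi (r / 2),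
      0 ≤ Real.sinh (x + r / 2) / Real.cosh (x / 2) ^ k := by
    intro x hx
    have hx0 : 0 < x := lt_of_le_of_lt ha hx
    exact div_nonneg (Real.sinh_nonneg_iff.2 (by linarith)) (Real.rpow_nonneg (Real.cosh_pos _).le _)
  have hIle : (∫ ρ in Ioi (r / 2), Real.sinh (ρ + r / 2) / Real.cosh (ρ / 2) ^ k)
      ≤ ∫ ρ in Ioi (r / 2), g ρ := by
    apply integral_mono_of_nonneg
    · filter_upwards [ae_restrict_mem measurableSet_Ioi] with x hx using hfnonneg x hx
    · exact hgint
    · filter_upwards [ae_restrict_mem measurableSet_Ioi] with x hx using hbound x hx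
  have hgval : (∫ ρ in Ioi (r / 2), g ρ)
      = 4 * Real.cosh (r / 2) / (k - 2) * c ^ (2 - k) + 8 / (k - 4) * c ^ (4 - k) := by
    rw [hg]
    rw [integral_add (hint1.const_mul _) (hint2.const_mul _),
      integral_const_mul, integral_const_mul, hval1, hval2]
    have e1 : r / 2 / 2 = r / 4 := by ring
    rw [e1]
    rw [show k - 1 - 1 = k - 2 by ring, show k - 3 - 1 = k - 4 by ring,
      show 1 - (k - 1) = 2 - k by ring, show 1 - (k - 3) = 4 - k by ring]
    field_simp
    ring
  have hcosh_r2 : Real.cosh (r / 2) = 2 * s ^ 2 + 1 := by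
    rw [show r / 2 = 2 * (r / 4) by ring, Real.cosh_two_mul, Real.cosh_sq']
    ring
  have hc2 : c ^ (2 - k) = (c ^ (k - 2))⁻¹ := by
    rw [show (2:ℝ) - k = -(k - 2) by ring, Real.rpow_neg hcpos.le]
  have hc4 : c ^ (4 - k) = (c ^ (k - 4))⁻¹ := by
    rw [show (4:ℝ) - k = -(k - 4) by ring, Real.rpow_neg hcpos.le]
  have hck2 : (0:ℝ) < c ^ (k - 2) := Real.rpow_pos_of_pos hcpos _
  have hck4 : (0:ℝ) < c ^ (k - 4) := Real.rpow_pos_of_pos hcpos _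
  have hTle : (∫ ρ in Ioi (r / 2), Real.sinh (ρ + r / 2) / Real.cosh (ρ / 2) ^ k) / s ^ 2
      ≤ (4 * Real.cosh (r / 2) / (k - 2) * c ^ (2 - k) + 8 / (k - 4) * c ^ (4 - k)) / s ^ 2 := by
    rw [← hgval]
    exact (div_le_div_iff_of_pos_right (by positivity)).2 hIle
  refine hTle.trans_eq ?_
  rw [hcosh_r2, hc2, hc4]
  have hk2 : (k:ℝ) - 2 ≠ 0 := by linarith
  have hk4 : (k:ℝ) - 4 ≠ 0 := by linarith
  field_simp
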